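/- arXiv:2202.04278 — 12 statements merged into one kernel-verified Lean document; each statement's English description precedes it below -/
import Mathlib

section
/- ∀∀ soundness for relational models, part (a): for any set Σ, relations c, d on Σ and relations R, S on Σ, the semantic ∀∀ judgment — for all σ,σ',τ,τ', if R σ σ', c σ τ and d σ' τ' then S τ τ' — holds if and only if the relation Ṙ ; ⟨c|d⟩ ; (¬S)̇ on Σ×Σ is empty, where Ṙ and (¬S)̇ are the bitests of R and of the complement of S. -/
namespace BiKAT

variable {S : Type*}

/-- Relational composition: (A ; B) x z iff ∃ y, A x y ∧ B y z. -/
def rcomp {α : Type*} (A B : α → α → Prop) : α → α → Prop :=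
  fun x z => ∃ y, A x y ∧ B y z

/-- Union of relations. -/
def runion {α : Type*} (A B : α → α → Prop) : α → α → Prop :=
  fun x z => A x z ∨ B x z

/-- Reflexive-transitive closure. -/
def rstar {α : Type*} (A : α → α → Prop) : α → α → Prop :=
  Relation.ReflTransGen A

/-- Inclusion of relations, pointwise implication. -/
def rincl {α : Type*} (A B : α → α → Prop) : Prop := ∀ x y, A x y → B x y

/-- Test: sub-identity relation of a set. -/
def test (e : Set S) : S → S → Prop := fun x y => x ∈ e ∧ y = x

/-- Left embedding ⟨c]. -/
def lemb (c : S → S → Prop) : S × S → S × S → Prop :=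
  fun p q => c p.1 q.1 ∧ p.2 = q.2

/-- Right embedding [c⟩. -/
def remb (c : S → S → Prop) : S × S → S × S → Prop :=
  fun p q => c p.2 q.2 ∧ p.1 = q.1

/-- Two-argument embedding ⟨c|d⟩ := ⟨c] ; [d⟩. -/
def emb2 (c d : S → S → Prop) : S × S → S × S → Prop :=
  rcomp (lemb c) (remb d)

/-- Bitest Ṙ: sub-identity relation on Σ×Σ for a relation R on Σ. -/
def bitest (R : S → S → Prop) : S × S → S × S → Prop :=
  fun p q => R p.1 p.2 ∧ q.1 = p.1 ∧ q.2 = p.2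

/-- Havoc: the full relation. -/
def hav : S → S → Prop := fun _ _ => True

/-- while e do c := ([e];c)* ; [¬e]. -/
def wh (e : Set S) (c : S → S → Prop) : S → S → Prop :=
  rcomp (rstar (rcomp (test e) c)) (test eᶜ)

/-- The ∀∀ judgment c | d : R ≈> Sp. -/
def allall (c d R Sp : S → S → Prop) : Prop :=
  ∀ σ σ' τ τ', R σ σ' → c σ τ → d σ' τ' → Sp τ τ'

/-- Forward simulation judgment c | d : R ⇒∃ Sp. -/
def fsim (c d R Sp : S → S → Prop) : Prop :=
  ∀ σ σ' τ, R σ σ' → c σ τ → ∃ τ', d σ' τ' ∧ Sp τ τ'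

/-- Backward simulation judgment c | d : R ⇐∃ Sp. -/
def bsim (c d R Sp : S → S → Prop) : Prop :=
  ∀ σ τ τ', c σ τ → Sp τ τ' → ∃ σ', R σ σ' ∧ d σ' τ'

/-- Triple (componentwise) embedding ⟪a|b|c⟫ on Σ×Σ×Σ. -/
def tri (a b c : S → S → Prop) : S × S × S → S × S × S → Prop :=
  fun p q => a p.1 q.1 ∧ b p.2.1 q.2.1 ∧ c p.2.2 q.2.2

/-- ⟦A ∥ B⟧: pairs of BiKAT elements agreeing on the middle execution. -/
def tpair (A B : S × S → S × S → Prop) : S × S × S → S × S × S → Prop :=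
  fun p q => A (p.1, p.2.1) (q.1, q.2.1) ∧ B (p.2.1, p.2.2) (q.2.1, q.2.2)

/-- ⇙X: projection to the left two of three. -/
def proj2 (X : S × S × S → S × S × S → Prop) : S × S → S × S → Prop :=
  fun p q => ∃ s t, X (p.1, p.2, s) (q.1, q.2, t)

theorem emb2_iff {c d : S → S → Prop} {p q : S × S} :
    emb2 c d p q ↔ c p.1 q.1 ∧ d p.2 q.2 := by
  constructor
  · rintro ⟨y, ⟨hc, hy₂⟩, hd, hy₁⟩
    exact ⟨hy₁ ▸ hc, hy₂ ▸ hd⟩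
  · rintro ⟨hc, hd⟩
    exact ⟨(q.1, p.2), ⟨hc, rfl⟩, hd, rfl⟩

theorem rcomp_bitest_left_iff {R : S → S → Prop} {A : S × S → S × S → Prop} {p q : S × S} :
    rcomp (bitest R) A p q ↔ R p.1 p.2 ∧ A p q := by
  constructor
  · rintro ⟨y, ⟨hR, hy₁, hy₂⟩, hA⟩
    obtain rfl : y = p := Prod.ext hy₁ hy₂
    exact ⟨hR, hA⟩
  · rintro ⟨hR, hA⟩
    exact ⟨p, ⟨hR, rfl, rfl⟩, hA⟩

theorem rcomp_bitest_right_iff {R : S → S → Prop} {A : S × S → S × S → Prop} {p q : S × S} :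
    rcomp A (bitest R) p q ↔ A p q ∧ R q.1 q.2 := by
  constructor
  · rintro ⟨y, hA, hR, hq₁, hq₂⟩
    obtain rfl : q = y := Prod.ext hq₁ hq₂
    exact ⟨hA, hR⟩
  · rintro ⟨hA, hR⟩
    exact ⟨q, hA, hR, rfl, rfl⟩

end BiKAT

open BiKAT

/-- ∀∀ soundness for relational models, part (a). -/
theorem stmt2 (S : Type*) (c d R Sp : S → S → Prop) :
    allall c d R Sp ↔
      ∀ p q : S × S,
        ¬ rcomp (rcomp (bitest R) (emb2 c d)) (bitest (fun a b => ¬ Sp a b)) p q := by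
  simp only [rcomp_bitest_right_iff, rcomp_bitest_left_iff, emb2_iff, allall, Prod.forall]
  constructor
  · rintro h σ σ' τ τ' ⟨⟨hR, hc, hd⟩, hnSp⟩
    exact hnSp (h σ σ' τ τ' hR hc hd)
  · intro h σ σ' τ τ' hR hc hd
    by_contra hnSp
    exact h σ σ' τ τ' ⟨⟨hR, hc, hd⟩, hnSp⟩
end

section
/- The left embedding of the relational model is a homomorphism for Kleene star: for any set Σ and any binary relation c on Σ, the left embedding of the reflexive-transitive closure of c equals the reflexive-transitive closure of the left embedding of c, i.e. ⟨c*] = (⟨c])* as relations on Σ×Σ; and symmetrically [c*⟩ = ([c⟩)*. -/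
open BiKAT

namespace Relation

variable {α β : Type*} {r : α → α → Prop}

theorem reflTransGen_fst_and_snd_eq_iff {p q : α × β} :
    ReflTransGen (fun p q : α × β => r p.1 q.1 ∧ p.2 = q.2) p q ↔
      ReflTransGen r p.1 q.1 ∧ p.2 = q.2 := by
  constructor
  · intro h
    induction h with
    | refl => exact ⟨.refl, rfl⟩
    | tail _ step ih => exact ⟨ih.1.tail step.1, ih.2.trans step.2⟩
  · rintro ⟨h, hsnd⟩
    rw [show q = (q.1, p.2) from Prod.ext rfl hsnd.symm]
    exact h.lift (·, p.2) fun _ _ hr => ⟨hr, rfl⟩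

theorem reflTransGen_snd_and_fst_eq_iff {p q : β × α} :
    ReflTransGen (fun p q : β × α => r p.2 q.2 ∧ p.1 = q.1) p q ↔
      ReflTransGen r p.2 q.2 ∧ p.1 = q.1 := by
  constructor
  · intro h
    induction h with
    | refl => exact ⟨.refl, rfl⟩
    | tail _ step ih => exact ⟨ih.1.tail step.1, ih.2.trans step.2⟩
  · rintro ⟨h, hfst⟩
    rw [show q = (p.1, q.2) from Prod.ext hfst.symm rfl]
    exact h.lift (p.1, ·) fun _ _ hr => ⟨hr, rfl⟩

end Relation

/-- The embeddings are homomorphisms for Kleene star. -/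
theorem stmt4 (S : Type*) (c : S → S → Prop) :
    lemb (rstar c) = rstar (lemb c) ∧ remb (rstar c) = rstar (remb c) :=
  ⟨funext₂ fun _ _ => propext Relation.reflTransGen_fst_and_snd_eq_iff.symm,
    funext₂ fun _ _ => propext Relation.reflTransGen_snd_and_fst_eq_iff.symm⟩
end

section
/- Order separation for relational embeddings: for any set Σ and binary relations a, b on Σ, if the right embedding of b is contained in the left embedding of a (i.e. [b⟩ ⊆ ⟨a] as relations on Σ×Σ) and both a and b are nonempty, then the identity relation on Σ is contained in a and b is contained in the identity relation on Σ. -/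
open BiKAT

namespace BiKAT

variable {S : Type*} {a b : S → S → Prop}

theorem refl_of_remb_le_lemb (h : rincl (remb b) (lemb a)) (hb : ∃ x y, b x y) (x : S) :
    a x x := by
  obtain ⟨u, v, huv⟩ := hb
  exact (h (x, u) (x, v) ⟨huv, rfl⟩).1

theorem eq_of_remb_le_lemb [Nonempty S] (h : rincl (remb b) (lemb a)) {x y : S}
    (hxy : b x y) : x = y :=
  (h (Classical.arbitrary S, x) (Classical.arbitrary S, y) ⟨hxy, rfl⟩).2

end BiKAT

/-- Order separation for relational embeddings. -/
theorem stmt6 (S : Type*) (a b : S → S → Prop)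
    (h : rincl (remb b) (lemb a))
    (ha : ∃ x y, a x y) (hb : ∃ x y, b x y) :
    (∀ x, a x x) ∧ (∀ x y, b x y → x = y) := by
  obtain ⟨u, -⟩ := ha
  have : Nonempty S := ⟨u⟩
  exact ⟨refl_of_remb_le_lemb h hb, fun _ _ => eq_of_remb_le_lemb h⟩
end

section
/- TriKAT characterization of forward simulation (forward part of the lemma): for any set Σ and relations c, d, R, S on Σ, the forward simulation judgment c | d : R ⇒∃ S holds if and only if Ṙ ; ⟨c | hav⟩ ; (id)̇ ⊆ ⇙( ⟦Ṙ ∥ (id)̇⟧ ; ⟪c | hav | d⟫ ; ⟦(id)̇ ∥ Ṡ⟧ ), where the left-hand side is a relation on Σ×Σ, hav is the full relation on Σ, id is the identity relation on Σ, ⟪a|b|c⟫ is the componentwise triple embedding on Σ×Σ×Σ, ⟦A ∥ B⟧ relates triples (σ,σ',σ'') to (τ,τ',τ'') iff (σ,σ') A (τ,τ') and (σ',σ'') B (τ',τ''), and ⇙X relates (σ,σ') to (τ,τ') iff there exist σ'', τ'' with (σ,σ',σ'') X (τ,τ',τ''). -/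
namespace BiKAT

section SubIdentity

variable {α : Type*} {T : α → α → Prop} {P : α → Prop}

theorem rcomp_apply_of_subid_left (hT : ∀ p q, T p q ↔ P p ∧ q = p) (A : α → α → Prop)
    (p q : α) : rcomp T A p q ↔ P p ∧ A p q := by
  simp only [rcomp, hT]
  exact ⟨fun ⟨_, ⟨hP, rfl⟩, hA⟩ => ⟨hP, hA⟩, fun ⟨hP, hA⟩ => ⟨p, ⟨hP, rfl⟩, hA⟩⟩

theorem rcomp_apply_of_subid_right (hT : ∀ p q, T p q ↔ P p ∧ q = p) (A : α → α → Prop)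
    (p q : α) : rcomp A T p q ↔ A p q ∧ P q := by
  simp only [rcomp, hT]
  exact ⟨fun ⟨_, hA, hP, rfl⟩ => ⟨hA, hP⟩, fun ⟨hA, hP⟩ => ⟨q, hA, hP, rfl⟩⟩

end SubIdentity

variable {S : Type*}

theorem bitest_apply (R : S → S → Prop) (p q : S × S) :
    bitest R p q ↔ R p.1 p.2 ∧ q = p := by
  simp only [bitest, Prod.ext_iff]

theorem tpair_bitest_apply (R Q : S → S → Prop) (p q : S × S × S) :
    tpair (bitest R) (bitest Q) p q ↔ (R p.1 p.2.1 ∧ Q p.2.1 p.2.2) ∧ q = p := by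
  simp only [tpair, bitest_apply, Prod.ext_iff]
  tauto

theorem emb2_hav_apply (c : S → S → Prop) (p q : S × S) : emb2 c hav p q ↔ c p.1 q.1 := by
  constructor
  · rintro ⟨y, ⟨hc, -⟩, -, hy⟩
    rwa [hy] at hc
  · intro hc
    exact ⟨(q.1, p.2), ⟨hc, rfl⟩, trivial, rfl⟩

theorem tri_hav_apply (a b : S → S → Prop) (p q : S × S × S) :
    tri a hav b p q ↔ a p.1 q.1 ∧ b p.2.2 q.2.2 := by
  simp only [tri, hav, true_and]

theorem fsim_lhs_apply (c R : S → S → Prop) (p q : S × S) :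
    rcomp (rcomp (bitest R) (emb2 c hav)) (bitest (fun x y => x = y)) p q ↔
      R p.1 p.2 ∧ c p.1 q.1 ∧ q.1 = q.2 := by
  rw [rcomp_apply_of_subid_right (bitest_apply _), rcomp_apply_of_subid_left (bitest_apply _),
    emb2_hav_apply, and_assoc]

theorem fsim_rhs_apply (c d R Sp : S → S → Prop) (σ σ' τ τ' : S) :
    proj2 (rcomp
        (rcomp (tpair (bitest R) (bitest (fun x y => x = y))) (tri c hav d))
        (tpair (bitest (fun x y => x = y)) (bitest Sp))) (σ, σ') (τ, τ') ↔
      (R σ σ' ∧ c σ τ ∧ τ = τ') ∧ ∃ τ'', d σ' τ'' ∧ Sp τ τ'' := by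
  simp only [proj2, rcomp_apply_of_subid_right (tpair_bitest_apply _ _),
    rcomp_apply_of_subid_left (tpair_bitest_apply _ _), tri_hav_apply]
  constructor
  · rintro ⟨_, t, ⟨⟨hR, rfl⟩, hc, hd⟩, rfl, hSp⟩
    exact ⟨⟨hR, hc, rfl⟩, t, hd, hSp⟩
  · rintro ⟨⟨hR, hc, rfl⟩, t, hd, hSp⟩
    exact ⟨σ', t, ⟨⟨hR, rfl⟩, hc, hd⟩, rfl, hSp⟩

end BiKAT

open BiKAT

/-- TriKAT characterization of forward simulation. -/
theorem stmt7 (S : Type*) (c d R Sp : S → S → Prop) :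
    fsim c d R Sp ↔
      rincl (rcomp (rcomp (bitest R) (emb2 c hav)) (bitest (fun x y => x = y)))
        (proj2 (rcomp
          (rcomp (tpair (bitest R) (bitest (fun x y => x = y))) (tri c hav d))
          (tpair (bitest (fun x y => x = y)) (bitest Sp)))) := by
  simp only [fsim, rincl, Prod.forall, fsim_lhs_apply, fsim_rhs_apply]
  constructor
  · rintro h σ σ' τ _ ⟨hR, hc, rfl⟩
    exact ⟨⟨hR, hc, rfl⟩, h σ σ' τ hR hc⟩
  · intro h σ σ' τ hR hc
    exact (h σ σ' τ τ ⟨hR, hc, rfl⟩).2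
end

section
/- Soundness of the relational-Hoare-logic rule dIf in the relational model: for any set Σ, relations c, c', d, d', P, Q on Σ and subsets e, e' of Σ, suppose (i) P σ σ' implies (σ ∈ e ↔ σ' ∈ e') for all σ, σ'; (ii) the ∀∀ judgment c | c' : (P ∧ ⌐e ∧ e'⌐) ≈> Q holds, where (P ∧ ⌐e ∧ e'⌐) σ σ' means P σ σ' ∧ σ ∈ e ∧ σ' ∈ e'; and (iii) the ∀∀ judgment d | d' : (P ∧ ⌐¬e ∧ ¬e'⌐) ≈> Q holds. Then the ∀∀ judgment ([e];c + [¬e];d) | ([e'];c' + [¬e'];d') : P ≈> Q holds, where + is union. -/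
namespace BiKAT

variable {S : Type*}

section Judgments

variable {c c₁ c₂ d d₁ d₂ R Q : S → S → Prop}

theorem allall_runion_left (h₁ : allall c₁ d R Q) (h₂ : allall c₂ d R Q) :
    allall (runion c₁ c₂) d R Q := by
  rintro σ σ' τ τ' hR (hc | hc) hd
  exacts [h₁ σ σ' τ τ' hR hc hd, h₂ σ σ' τ τ' hR hc hd]

theorem allall_runion_right (h₁ : allall c d₁ R Q) (h₂ : allall c d₂ R Q) :
    allall c (runion d₁ d₂) R Q := by
  rintro σ σ' τ τ' hR hc (hd | hd)
  exacts [h₁ σ σ' τ τ' hR hc hd, h₂ σ σ' τ τ' hR hc hd]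

theorem allall_test_rcomp_iff (e e' : Set S) :
    allall (rcomp (test e) c) (rcomp (test e') d) R Q ↔
      allall c d (fun σ σ' => R σ σ' ∧ σ ∈ e ∧ σ' ∈ e') Q := by
  constructor
  · rintro h σ σ' τ τ' ⟨hR, he, he'⟩ hc hd
    exact h σ σ' τ τ' hR ⟨σ, ⟨he, rfl⟩, hc⟩ ⟨σ', ⟨he', rfl⟩, hd⟩
  · rintro h σ σ' τ τ' hR ⟨ρ, ⟨he, rfl⟩, hc⟩ ⟨ρ', ⟨he', rfl⟩, hd⟩
    exact h ρ ρ' τ τ' ⟨hR, he, he'⟩ hc hd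

theorem allall_of_forall_not (hR : ∀ σ σ', ¬ R σ σ') : allall c d R Q :=
  fun σ σ' _ _ h _ _ => (hR σ σ' h).elim

end Judgments

end BiKAT

open BiKAT

/-- Soundness of rule dIf in the relational model. -/
theorem stmt9 (S : Type*) (c c' d d' P Q : S → S → Prop) (e e' : Set S)
    (h0 : ∀ σ σ', P σ σ' → (σ ∈ e ↔ σ' ∈ e'))
    (h1 : allall c c' (fun σ σ' => P σ σ' ∧ σ ∈ e ∧ σ' ∈ e') Q)
    (h2 : allall d d' (fun σ σ' => P σ σ' ∧ σ ∉ e ∧ σ' ∉ e') Q) :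
    allall (runion (rcomp (test e) c) (rcomp (test eᶜ) d))
           (runion (rcomp (test e') c') (rcomp (test e'ᶜ) d')) P Q := by
  -- the guards agree on P-related states, so mixed branches have an empty precondition
  refine allall_runion_left (allall_runion_right ?_ ?_) (allall_runion_right ?_ ?_) <;>
    rw [allall_test_rcomp_iff]
  · exact h1
  · exact allall_of_forall_not fun σ σ' ⟨hP, he, he'⟩ => he' ((h0 σ σ' hP).mp he)
  · exact allall_of_forall_not fun σ σ' ⟨hP, he, he'⟩ => he ((h0 σ σ' hP).mpr he')
  · exact h2
end

section
/- Soundness of the relational-Hoare-logic rule dWh (lockstep while rule) in the relational model: for any set Σ, relations c, c', P on Σ and subsets e, e' of Σ, suppose (i) P σ σ' implies (σ ∈ e ↔ σ' ∈ e') for all σ, σ'; and (ii) the ∀∀ judgment c | c' : (P ∧ ⌐e ∧ e'⌐) ≈> P holds, where (P ∧ ⌐e ∧ e'⌐) σ σ' means P σ σ' ∧ σ ∈ e ∧ σ' ∈ e'. Then the ∀∀ judgment (while e do c) | (while e' do c') : P ≈> (P ∧ ⌐¬e ∧ ¬e'⌐) holds, where while e do c := ([e];c)* ; [¬e]. -/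
namespace BiKAT

variable {S : Type*}

/-! Under `P` the two guards agree, so the loops iterate in lockstep: by induction on the
unrolling of the left loop, each joint iteration starts in `P ∧ e ∧ e'` and hence ends in `P`. -/

@[simp]
theorem rcomp_test_left {e : Set S} {c : S → S → Prop} {x z : S} :
    rcomp (test e) c x z ↔ x ∈ e ∧ c x z :=
  ⟨fun ⟨_, ⟨hx, rfl⟩, h⟩ => ⟨hx, h⟩, fun ⟨hx, h⟩ => ⟨x, ⟨hx, rfl⟩, h⟩⟩

@[simp]
theorem rcomp_test_right {e : Set S} {c : S → S → Prop} {x z : S} :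
    rcomp c (test e) x z ↔ c x z ∧ z ∈ e :=
  ⟨fun ⟨_, h, hz, rfl⟩ => ⟨h, hz⟩, fun ⟨h, hz⟩ => ⟨z, h, hz, rfl⟩⟩

theorem wh_iff {e : Set S} {c : S → S → Prop} {σ τ : S} :
    wh e c σ τ ↔ rstar (rcomp (test e) c) σ τ ∧ τ ∉ e :=
  rcomp_test_right

theorem rstar_rcomp_test_cases_head_iff {e : Set S} {c : S → S → Prop} {σ τ : S} :
    rstar (rcomp (test e) c) σ τ ↔
      σ = τ ∨ σ ∈ e ∧ ∃ ρ, c σ ρ ∧ rstar (rcomp (test e) c) ρ τ := by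
  rw [rstar, Relation.ReflTransGen.cases_head_iff]
  simp only [rcomp_test_left, and_assoc, exists_and_left]

theorem invariant_of_rstar_lockstep {c c' P : S → S → Prop} {e e' : Set S}
    (hguard : ∀ σ σ', P σ σ' → (σ ∈ e ↔ σ' ∈ e'))
    (hbody : allall c c' (fun σ σ' => P σ σ' ∧ σ ∈ e ∧ σ' ∈ e') P)
    {σ σ' τ τ' : S} (hrun : rstar (rcomp (test e) c) σ τ) (hτ : τ ∉ e)
    (hrun' : rstar (rcomp (test e') c') σ' τ') (hτ' : τ' ∉ e') (hP : P σ σ') : P τ τ' := by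
  induction hrun using Relation.ReflTransGen.head_induction_on generalizing σ' with
  | refl =>
    rcases rstar_rcomp_test_cases_head_iff.mp hrun' with rfl | ⟨he', -⟩
    · exact hP
    · exact absurd ((hguard _ _ hP).mpr he') hτ
  | head hstep _ ih =>
    obtain ⟨he, hc⟩ := rcomp_test_left.mp hstep
    rcases rstar_rcomp_test_cases_head_iff.mp hrun' with rfl | ⟨he', ρ', hc', hrun'⟩
    · exact absurd ((hguard _ _ hP).mp he) hτ'
    · exact ih hrun' (hbody _ _ _ _ ⟨hP, he, he'⟩ hc hc')

end BiKAT

open BiKAT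

/-- Soundness of the lockstep while rule dWh. -/
theorem stmt10 (S : Type*) (c c' P : S → S → Prop) (e e' : Set S)
    (h0 : ∀ σ σ', P σ σ' → (σ ∈ e ↔ σ' ∈ e'))
    (h1 : allall c c' (fun σ σ' => P σ σ' ∧ σ ∈ e ∧ σ' ∈ e') P) :
    allall (wh e c) (wh e' c') P (fun τ τ' => P τ τ' ∧ τ ∉ e ∧ τ' ∉ e') := by
  intro σ σ' τ τ' hP hrun hrun'
  obtain ⟨hstar, hτ⟩ := wh_iff.mp hrun
  obtain ⟨hstar', hτ'⟩ := wh_iff.mp hrun'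
  exact ⟨invariant_of_rstar_lockstep h0 h1 hstar hτ hstar' hτ' hP, hτ, hτ'⟩
end

section
/- Soundness of the conditionally-aligned while rule caWh in the relational model: for any set Σ, relations c, c', P, Q, R on Σ and subsets e, e' of Σ, suppose (i) c | c' : (P ∧ ⌐e ∧ e'⌐ ∧ ¬Q ∧ ¬R) ≈> P; (ii) c | skip : (P ∧ Q ∧ ⌐e⌐) ≈> P, where skip is the identity relation; (iii) skip | c' : (P ∧ R ∧ e'⌐) ≈> P; and (iv) for all σ, σ' with P σ σ': (σ ∈ e ↔ σ' ∈ e') or (Q σ σ' and σ ∈ e) or (R σ σ' and σ' ∈ e'). Then the ∀∀ judgment (while e do c) | (while e' do c') : P ≈> (P ∧ ⌐¬e ∧ ¬e'⌐) holds. Here conjunction of a relation with left/right state conditions is pointwise, e.g. (P ∧ ⌐e ∧ e'⌐) σ σ' means P σ σ' ∧ σ ∈ e ∧ σ' ∈ e', and while e do c := ([e];c)* ; [¬e]. -/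
namespace BiKAT

variable {S : Type*} {e : Set S} {c : S → S → Prop}

theorem wh_self {τ : S} (hτ : τ ∉ e) : wh e c τ τ :=
  ⟨τ, Relation.ReflTransGen.refl, hτ, rfl⟩

theorem notMem_of_wh {σ τ : S} (h : wh e c σ τ) : τ ∉ e := by
  obtain ⟨_, _, hu, rfl⟩ := h
  exact hu

theorem wh_head {σ υ τ : S} (hσ : σ ∈ e) (hc : c σ υ) (h : wh e c υ τ) : wh e c σ τ := by
  obtain ⟨u, hrun, hexit⟩ := h
  exact ⟨u, Relation.ReflTransGen.head ⟨σ, ⟨hσ, rfl⟩, hc⟩ hrun, hexit⟩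

@[elab_as_elim]
theorem wh_head_induction_on {τ : S} {motive : ∀ σ, wh e c σ τ → Prop} {σ : S}
    (h : wh e c σ τ) (exit : ∀ hτ : τ ∉ e, motive τ (wh_self hτ))
    (head : ∀ σ υ (hσ : σ ∈ e) (hc : c σ υ) (h : wh e c υ τ), motive υ h →
      motive σ (wh_head hσ hc h)) : motive σ h := by
  obtain ⟨u, hrun, hu, rfl⟩ := h
  induction hrun using Relation.ReflTransGen.head_induction_on with
  | refl => exact exit hu
  | head hstep hrun ih =>
    obtain ⟨_, ⟨hσ, rfl⟩, hc⟩ := hstep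
    exact head _ _ hσ hc ⟨_, hrun, hu, rfl⟩ ih

theorem wh_invariant {I : S → Prop} (hI : ∀ x y, I x → x ∈ e → c x y → I y) {σ τ : S}
    (h : wh e c σ τ) (hσ : I σ) : I τ := by
  induction h using wh_head_induction_on with
  | exit => exact hσ
  | head σ υ hσe hc _ ih => exact ih (hI σ υ hσ hσe hc)

end BiKAT

open BiKAT

section CaWh

variable {S : Type*} {c c' P Q R : S → S → Prop} {e e' : Set S}

theorem wh_right_invariant_of_notMem
    (h3 : allall (fun x y => x = y) c' (fun σ σ' => P σ σ' ∧ R σ σ' ∧ σ' ∈ e') P)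
    (h4 : ∀ σ σ', P σ σ' →
      ((σ ∈ e ↔ σ' ∈ e') ∨ (Q σ σ' ∧ σ ∈ e) ∨ (R σ σ' ∧ σ' ∈ e')))
    {σ σ' τ' : S} (hσ : σ ∉ e) (hP : P σ σ') (hw' : wh e' c' σ' τ') : P σ τ' := by
  refine wh_invariant (fun x y hx hxe hc => h3 σ x σ y ⟨hx, ?_, hxe⟩ rfl hc) hw' hP
  rcases h4 σ x hx with hiff | ⟨-, hσe⟩ | ⟨hR, -⟩
  · exact absurd (hiff.mpr hxe) hσ
  · exact absurd hσe hσ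
  · exact hR

theorem caWh_left_step
    (h1 : allall c c'
      (fun σ σ' => P σ σ' ∧ σ ∈ e ∧ σ' ∈ e' ∧ ¬ Q σ σ' ∧ ¬ R σ σ') P)
    (h2 : allall c (fun x y => x = y) (fun σ σ' => P σ σ' ∧ Q σ σ' ∧ σ ∈ e) P)
    (h3 : allall (fun x y => x = y) c' (fun σ σ' => P σ σ' ∧ R σ σ' ∧ σ' ∈ e') P)
    (h4 : ∀ σ σ', P σ σ' →
      ((σ ∈ e ↔ σ' ∈ e') ∨ (Q σ σ' ∧ σ ∈ e) ∨ (R σ σ' ∧ σ' ∈ e')))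
    {σ υ τ τ' : S} (hσ : σ ∈ e) (hc : c σ υ)
    (ih : ∀ σ', P υ σ' → wh e' c' σ' τ' → P τ τ')
    {σ' : S} (hP : P σ σ') (hw' : wh e' c' σ' τ') : P τ τ' := by
  induction hw' using wh_head_induction_on with
  | exit hτ' =>
    have hQ : Q σ τ' := by
      rcases h4 σ τ' hP with hiff | ⟨hQ, -⟩ | ⟨-, hτ'e⟩
      · exact absurd (hiff.mp hσ) hτ'
      · exact hQ
      · exact absurd hτ'e hτ'
    exact ih τ' (h2 σ τ' υ τ' ⟨hP, hQ, hσ⟩ hc rfl) (wh_self hτ')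
  | head σ' υ' hσ' hc' hw'' ihR =>
    by_cases hQ : Q σ σ'
    · exact ih σ' (h2 σ σ' υ σ' ⟨hP, hQ, hσ⟩ hc rfl) (wh_head hσ' hc' hw'')
    by_cases hR : R σ σ'
    · exact ihR (h3 σ σ' σ υ' ⟨hP, hR, hσ'⟩ rfl hc')
    · exact ih υ' (h1 σ σ' υ υ' ⟨hP, hσ, hσ', hQ, hR⟩ hc hc') hw''

end CaWh

/-- Soundness of the conditionally-aligned while rule caWh. -/
theorem stmt12 (S : Type*) (c c' P Q R : S → S → Prop) (e e' : Set S)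
    (h1 : allall c c'
      (fun σ σ' => P σ σ' ∧ σ ∈ e ∧ σ' ∈ e' ∧ ¬ Q σ σ' ∧ ¬ R σ σ') P)
    (h2 : allall c (fun x y => x = y) (fun σ σ' => P σ σ' ∧ Q σ σ' ∧ σ ∈ e) P)
    (h3 : allall (fun x y => x = y) c' (fun σ σ' => P σ σ' ∧ R σ σ' ∧ σ' ∈ e') P)
    (h4 : ∀ σ σ', P σ σ' →
      ((σ ∈ e ↔ σ' ∈ e') ∨ (Q σ σ' ∧ σ ∈ e) ∨ (R σ σ' ∧ σ' ∈ e'))) :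
    allall (wh e c) (wh e' c') P (fun τ τ' => P τ τ' ∧ τ ∉ e ∧ τ' ∉ e') := by
  intro σ σ' τ τ' hP hw hw'
  have hτ : τ ∉ e := notMem_of_wh hw
  refine ⟨?_, hτ, notMem_of_wh hw'⟩
  induction hw using wh_head_induction_on generalizing σ' with
  | exit => exact wh_right_invariant_of_notMem h3 h4 hτ hP hw'
  | head σ υ hσ hc _ ih => exact caWh_left_step h1 h2 h3 h4 hσ hc ih hP hw'
end

section
/- Backward witness soundness: for any set Σ, relations c, d, R, S on Σ, and any relation W on Σ×Σ, if W is b-valid, i.e. (WCb) W ; Ṡ ⊆ Ṙ ; W ; Ṡ, (WOb) ⟨c] ; Ṡ ⊆ [hav⟩ ; W, and (WUb) W ; Ṡ ⊆ ⟨hav | d⟩, then the backward simulation judgment c | d : R ⇐∃ S holds: for all σ, τ, τ' with c σ τ and S τ τ' there exists σ' with R σ σ' and d σ' τ'. -/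
open BiKAT

/-! The witness is supplied by (WOb): from `c σ τ` and `Sp τ τ'` it yields some `s` with
`W (σ, s) (τ, τ')`. Since the post-state `(τ, τ')` satisfies `Sp`, (WCb) then gives `R σ s`
and (WUb) gives `d s τ'`. -/

namespace BiKAT

variable {S : Type*}

theorem bitest_iff {R : S → S → Prop} {p q : S × S} : bitest R p q ↔ R p.1 p.2 ∧ q = p := by
  simp only [bitest, Prod.ext_iff]

theorem rcomp_bitest_right {A : S × S → S × S → Prop} {R : S → S → Prop} {p q : S × S} :
    rcomp A (bitest R) p q ↔ A p q ∧ R q.1 q.2 := by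
  simp only [rcomp, bitest_iff]
  constructor
  · rintro ⟨r, hA, hR, rfl⟩
    exact ⟨hA, hR⟩
  · exact fun ⟨hA, hR⟩ => ⟨q, hA, hR, rfl⟩

theorem rcomp_bitest_left {A : S × S → S × S → Prop} {R : S → S → Prop} {p q : S × S} :
    rcomp (bitest R) A p q ↔ R p.1 p.2 ∧ A p q := by
  simp only [rcomp, bitest_iff]
  constructor
  · rintro ⟨r, ⟨hR, rfl⟩, hA⟩
    exact ⟨hR, hA⟩
  · exact fun ⟨hR, hA⟩ => ⟨p, ⟨hR, rfl⟩, hA⟩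

theorem rcomp_remb_hav {A : S × S → S × S → Prop} {p q : S × S} :
    rcomp (remb hav) A p q ↔ ∃ s, A (p.1, s) q := by
  constructor
  · rintro ⟨⟨r₁, s⟩, ⟨-, hr₁⟩, hA⟩
    obtain rfl : r₁ = p.1 := hr₁.symm
    exact ⟨s, hA⟩
  · rintro ⟨s, hA⟩
    exact ⟨(p.1, s), ⟨trivial, rfl⟩, hA⟩

theorem emb2_hav {d : S → S → Prop} {p q : S × S} : emb2 hav d p q ↔ d p.2 q.2 := by
  constructor
  · rintro ⟨r, ⟨-, hr₂⟩, hd, -⟩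
    exact hr₂ ▸ hd
  · intro hd
    exact ⟨(q.1, p.2), ⟨trivial, rfl⟩, hd, rfl⟩

end BiKAT

/-- Backward witness soundness. -/
theorem stmt14 (S : Type*) (c d R Sp : S → S → Prop) (W : S × S → S × S → Prop)
    (hWCb : rincl (rcomp W (bitest Sp)) (rcomp (rcomp (bitest R) W) (bitest Sp)))
    (hWOb : rincl (rcomp (lemb c) (bitest Sp)) (rcomp (remb hav) W))
    (hWUb : rincl (rcomp W (bitest Sp)) (emb2 hav d)) :
    bsim c d R Sp := by
  intro σ τ τ' hc hS
  obtain ⟨s, hW⟩ := rcomp_remb_hav.1 <| hWOb (σ, τ') (τ, τ') <| rcomp_bitest_right.2 ⟨⟨hc, rfl⟩, hS⟩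
  have hWS : rcomp W (bitest Sp) (σ, s) (τ, τ') := rcomp_bitest_right.2 ⟨hW, hS⟩
  have hR : R σ s := (rcomp_bitest_left.1 (rcomp_bitest_right.1 (hWCb _ _ hWS)).1).1
  exact ⟨s, hR, emb2_hav.1 (hWUb _ _ hWS)⟩
end

section
/- Witness completeness for forward simulation: for any set Σ and relations c, d, R, S on Σ, the forward simulation judgment c | d : R ⇒∃ S holds if and only if there exists a relation W on Σ×Σ that is f-valid, i.e. satisfying (WC) Ṙ ; W ⊆ Ṙ ; W ; Ṡ, (WO) Ṙ ; ⟨c] ⊆ W ; [hav⟩, and (WU) Ṙ ; W ⊆ ⟨hav | d⟩. -/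
/-! Soundness: from `R σ σ'` and `c σ τ`, (WO) gives a `W`-step from `(σ, σ')` to some
`(τ, τ')`; (WU) makes `τ'` a `d`-successor of `σ'` and (WC) makes `(τ, τ')` an `Sp`-pair.
Completeness: the pairs of a `c`-step and a `d`-step with `Sp`-related targets form an f-valid
witness, (WO) being exactly the simulation property. -/

namespace BiKAT

variable {S : Type*}

theorem bitest_rcomp_iff (R : S → S → Prop) (W : S × S → S × S → Prop) (p q : S × S) :
    rcomp (bitest R) W p q ↔ R p.1 p.2 ∧ W p q := by
  constructor
  · rintro ⟨⟨_, _⟩, ⟨hR, rfl, rfl⟩, hW⟩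
    exact ⟨hR, hW⟩
  · rintro ⟨hR, hW⟩
    exact ⟨p, ⟨hR, rfl, rfl⟩, hW⟩

theorem rcomp_bitest_iff (W : S × S → S × S → Prop) (Sp : S → S → Prop) (p q : S × S) :
    rcomp W (bitest Sp) p q ↔ W p q ∧ Sp q.1 q.2 := by
  constructor
  · rintro ⟨⟨_, _⟩, hW, hS, rfl, rfl⟩
    exact ⟨hW, hS⟩
  · rintro ⟨hW, hS⟩
    exact ⟨q, hW, hS, rfl, rfl⟩

theorem rcomp_remb_hav_iff (W : S × S → S × S → Prop) (p q : S × S) :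
    rcomp W (remb hav) p q ↔ ∃ t, W p (q.1, t) := by
  constructor
  · rintro ⟨⟨_, t⟩, hW, -, rfl⟩
    exact ⟨t, hW⟩
  · rintro ⟨t, hW⟩
    exact ⟨(q.1, t), hW, trivial, rfl⟩

theorem emb2_hav_iff (d : S → S → Prop) (p q : S × S) : emb2 hav d p q ↔ d p.2 q.2 := by
  constructor
  · rintro ⟨⟨_, _⟩, ⟨-, rfl⟩, hd, -⟩
    exact hd
  · intro hd
    exact ⟨(q.1, p.2), ⟨trivial, rfl⟩, hd, rfl⟩

/-- f-validity of a witness `W`: the conjunction (WC) ∧ (WO) ∧ (WU). -/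
def FValid (c d R Sp : S → S → Prop) (W : S × S → S × S → Prop) : Prop :=
  rincl (rcomp (bitest R) W) (rcomp (rcomp (bitest R) W) (bitest Sp)) ∧
    rincl (rcomp (bitest R) (lemb c)) (rcomp W (remb hav)) ∧
    rincl (rcomp (bitest R) W) (emb2 hav d)

theorem FValid.fsim {c d R Sp : S → S → Prop} {W : S × S → S × S → Prop}
    (hW : FValid c d R Sp W) : fsim c d R Sp := by
  obtain ⟨hWC, hWO, hWU⟩ := hW
  intro σ σ' τ hR hc
  obtain ⟨τ', hstep⟩ := (rcomp_remb_hav_iff W _ (τ, σ')).1 <|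
    hWO _ _ <| (bitest_rcomp_iff R _ (σ, σ') _).2 ⟨hR, hc, rfl⟩
  have hRW := (bitest_rcomp_iff R W (σ, σ') (τ, τ')).2 ⟨hR, hstep⟩
  exact ⟨τ', (emb2_hav_iff d _ _).1 (hWU _ _ hRW),
    ((rcomp_bitest_iff _ Sp _ _).1 (hWC _ _ hRW)).2⟩

def fsimWitness (c d Sp : S → S → Prop) : S × S → S × S → Prop :=
  fun p q => c p.1 q.1 ∧ d p.2 q.2 ∧ Sp q.1 q.2

theorem fValid_fsimWitness {c d R Sp : S → S → Prop} (h : fsim c d R Sp) :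
    FValid c d R Sp (fsimWitness c d Sp) := by
  refine ⟨fun p q hRW => ?_, fun p q hRc => ?_, fun p q hRW => ?_⟩
  · exact (rcomp_bitest_iff _ Sp p q).2 ⟨hRW, ((bitest_rcomp_iff R _ p q).1 hRW).2.2.2⟩
  · obtain ⟨hR, hc, -⟩ := (bitest_rcomp_iff R (lemb c) p q).1 hRc
    obtain ⟨τ', hd, hS⟩ := h p.1 p.2 q.1 hR hc
    exact (rcomp_remb_hav_iff _ p q).2 ⟨τ', hc, hd, hS⟩
  · exact (emb2_hav_iff d p q).2 ((bitest_rcomp_iff R _ p q).1 hRW).2.2.1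

theorem fsim_iff_exists_fValid (c d R Sp : S → S → Prop) :
    fsim c d R Sp ↔ ∃ W, FValid c d R Sp W :=
  ⟨fun h => ⟨_, fValid_fsimWitness h⟩, fun ⟨_, hW⟩ => hW.fsim⟩

end BiKAT

open BiKAT

/-- Witness completeness for forward simulation. -/
theorem stmt15 (S : Type*) (c d R Sp : S → S → Prop) :
    fsim c d R Sp ↔
      ∃ W : S × S → S × S → Prop,
        rincl (rcomp (bitest R) W) (rcomp (rcomp (bitest R) W) (bitest Sp)) ∧
        rincl (rcomp (bitest R) (lemb c)) (rcomp W (remb hav)) ∧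
        rincl (rcomp (bitest R) W) (emb2 hav d) :=
  fsim_iff_exists_fValid c d R Sp
end

section
/- Witness composition for the forward-simulation sequence rule (eSeq): for any set Σ, relations c, c', d, d', P, R, Q on Σ, and relations Z, W on Σ×Σ, if Z is an f-valid witness for c | c' with pre-relation P and post-relation R (i.e. Ṗ;Z ⊆ Ṗ;Z;Ṙ, Ṗ;⟨c] ⊆ Z;[hav⟩, and Ṗ;Z ⊆ ⟨hav|c'⟩) and W is an f-valid witness for d | d' with pre-relation R and post-relation Q (i.e. Ṙ;W ⊆ Ṙ;W;Q̇, Ṙ;⟨d] ⊆ W;[hav⟩, and Ṙ;W ⊆ ⟨hav|d'⟩), then Z ; W is an f-valid witness for (c ; d) | (c' ; d') with pre-relation P and post-relation Q, i.e. Ṗ;(Z;W) ⊆ Ṗ;(Z;W);Q̇, Ṗ;⟨c;d] ⊆ (Z;W);[hav⟩, and Ṗ;(Z;W) ⊆ ⟨hav | c';d'⟩. -/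
open BiKAT

/-! A witness condition of the form `Ṗ;Z ⊆ X` only constrains `Z` on pairs satisfying `P`, so
each of the three conditions unfolds to a pointwise statement about `Z`. In pointwise form the
post-relation `R` of `Z` is exactly the pre-relation under which `W` is used, and the three
conditions for `Z ; W` follow by chaining an intermediate pair of states. -/

namespace BiKAT

variable {S : Type*}

theorem rcomp_bitest_left_iff_s17 (P : S → S → Prop) (A : S × S → S × S → Prop) (x y : S × S) :
    rcomp (bitest P) A x y ↔ P x.1 x.2 ∧ A x y := by
  constructor
  · rintro ⟨x', ⟨hP, h1, h2⟩, hA⟩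
    obtain rfl : x' = x := Prod.ext h1 h2
    exact ⟨hP, hA⟩
  · rintro ⟨hP, hA⟩
    exact ⟨x, ⟨hP, rfl, rfl⟩, hA⟩

theorem rcomp_bitest_right_iff_s17 (A : S × S → S × S → Prop) (Q : S → S → Prop) (x y : S × S) :
    rcomp A (bitest Q) x y ↔ A x y ∧ Q y.1 y.2 := by
  constructor
  · rintro ⟨y', hA, hQ, h1, h2⟩
    obtain rfl : y = y' := Prod.ext h1 h2
    exact ⟨hA, hQ⟩
  · rintro ⟨hA, hQ⟩
    exact ⟨y, hA, hQ, rfl, rfl⟩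

theorem rincl_bitest_post_iff (P R : S → S → Prop) (Z : S × S → S × S → Prop) :
    rincl (rcomp (bitest P) Z) (rcomp (rcomp (bitest P) Z) (bitest R)) ↔
      ∀ x y, P x.1 x.2 → Z x y → R y.1 y.2 := by
  simp only [rincl, rcomp_bitest_right_iff_s17, rcomp_bitest_left_iff_s17]
  exact forall₂_congr fun x y => ⟨fun h hP hZ => (h ⟨hP, hZ⟩).2, fun h hPZ => ⟨hPZ, h hPZ.1 hPZ.2⟩⟩

theorem rincl_bitest_lemb_iff (P c : S → S → Prop) (Z : S × S → S × S → Prop) :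
    rincl (rcomp (bitest P) (lemb c)) (rcomp Z (remb hav)) ↔
      ∀ x t, P x.1 x.2 → c x.1 t → ∃ t', Z x (t, t') := by
  simp only [rincl, rcomp_bitest_left_iff_s17]
  simp only [rcomp, lemb, remb, hav, true_and]
  constructor
  · intro h x t hP hc
    obtain ⟨m, hZ, hm⟩ := h x (t, x.2) ⟨hP, hc, rfl⟩
    exact ⟨m.2, by rwa [← show m.1 = t from hm]⟩
  · rintro h x y ⟨hP, hc, -⟩
    obtain ⟨t', hZ⟩ := h x y.1 hP hc
    exact ⟨(y.1, t'), hZ, rfl⟩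

theorem rincl_bitest_emb2_hav_iff (P c' : S → S → Prop) (Z : S × S → S × S → Prop) :
    rincl (rcomp (bitest P) Z) (emb2 hav c') ↔ ∀ x y, P x.1 x.2 → Z x y → c' x.2 y.2 := by
  simp only [rincl, rcomp_bitest_left_iff_s17]
  simp only [emb2, rcomp, lemb, remb, hav, true_and]
  constructor
  · intro h x y hP hZ
    obtain ⟨m, hm, hc', -⟩ := h x y ⟨hP, hZ⟩
    rwa [hm]
  · rintro h x y ⟨hP, hZ⟩
    exact ⟨(y.1, x.2), rfl, h x y hP hZ, rfl⟩

end BiKAT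

/-- Witness composition for the forward-simulation sequence rule eSeq. -/
theorem stmt17 (S : Type*) (c c' d d' P R Q : S → S → Prop)
    (Z W : S × S → S × S → Prop)
    (hZC : rincl (rcomp (bitest P) Z) (rcomp (rcomp (bitest P) Z) (bitest R)))
    (hZO : rincl (rcomp (bitest P) (lemb c)) (rcomp Z (remb hav)))
    (hZU : rincl (rcomp (bitest P) Z) (emb2 hav c'))
    (hWC : rincl (rcomp (bitest R) W) (rcomp (rcomp (bitest R) W) (bitest Q)))
    (hWO : rincl (rcomp (bitest R) (lemb d)) (rcomp W (remb hav)))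
    (hWU : rincl (rcomp (bitest R) W) (emb2 hav d')) :
    rincl (rcomp (bitest P) (rcomp Z W))
          (rcomp (rcomp (bitest P) (rcomp Z W)) (bitest Q)) ∧
    rincl (rcomp (bitest P) (lemb (rcomp c d))) (rcomp (rcomp Z W) (remb hav)) ∧
    rincl (rcomp (bitest P) (rcomp Z W)) (emb2 hav (rcomp c' d')) := by
  rw [rincl_bitest_post_iff] at hZC hWC ⊢
  rw [rincl_bitest_lemb_iff] at hZO hWO ⊢
  rw [rincl_bitest_emb2_hav_iff] at hZU hWU ⊢
  refine ⟨?_, ?_, ?_⟩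
  · rintro x y hP ⟨m, hZ, hW⟩
    exact hWC m y (hZC x m hP hZ) hW
  · rintro x t hP ⟨u, hc, hd⟩
    obtain ⟨s, hZ⟩ := hZO x u hP hc
    obtain ⟨s', hW⟩ := hWO (u, s) t (hZC x _ hP hZ) hd
    exact ⟨s', _, hZ, hW⟩
  · rintro x y hP ⟨m, hZ, hW⟩
    exact ⟨m.2, hZU x m hP hZ, hWU m y (hZC x m hP hZ) hW⟩
end

section
/- Soundness of the forward-simulation while rule eWhL in the relational model: for any set Σ, relations c, c', P on Σ and subsets e, e' of Σ, suppose (i) for all σ, σ' with P σ σ', if σ' ∈ e' then σ ∈ e; (ii) the forward simulation judgment c | c' : (P ∧ ⌐e ∧ e'⌐) ⇒∃ P holds, where (P ∧ ⌐e ∧ e'⌐) σ σ' means P σ σ' ∧ σ ∈ e ∧ σ' ∈ e'; and (iii) the forward simulation judgment c | skip : (P ∧ ⌐e⌐) ⇒∃ P holds, where skip is the identity relation. Then the forward simulation judgment (while e do c) | (while e' do c') : P ⇒∃ (P ∧ ⌐¬e ∧ ¬e'⌐) holds, where while e do c := ([e];c)* ; [¬e]. -/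
open BiKAT

/- The loop invariant `P` is maintained by stuttering: a guarded step of the left loop is
matched by one guarded step of the right loop when the right guard holds, and by no step
otherwise. When the left loop exits, `h0` forces the right guard to fail too, so the right
loop exits in the matching state. -/

section Simulation

variable {S : Type*}

theorem fsim_rcomp {c c' d d' R Q T : S → S → Prop}
    (h : fsim c d R Q) (h' : fsim c' d' Q T) :
    fsim (rcomp c c') (rcomp d d') R T := by
  rintro σ σ' τ hR ⟨μ, hc, hc'⟩
  obtain ⟨μ', hd, hQ⟩ := h σ σ' μ hR hc
  obtain ⟨τ', hd', hT⟩ := h' μ μ' τ hQ hc'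
  exact ⟨τ', ⟨μ', hd, hd'⟩, hT⟩

theorem fsim_rstar {c d P : S → S → Prop} (h : fsim c (rstar d) P P) :
    fsim (rstar c) (rstar d) P P := by
  intro σ σ' τ hP hc
  induction hc using Relation.ReflTransGen.head_induction_on generalizing σ' with
  | refl => exact ⟨σ', Relation.ReflTransGen.refl, hP⟩
  | head hstep _ ih =>
    obtain ⟨μ', hd, hP'⟩ := h _ σ' _ hP hstep
    obtain ⟨τ', hd', hP''⟩ := ih μ' hP'
    exact ⟨τ', hd.trans hd', hP''⟩

theorem fsim_guarded_step {c c' P : S → S → Prop} {e e' : Set S}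
    (h1 : fsim c c' (fun σ σ' => P σ σ' ∧ σ ∈ e ∧ σ' ∈ e') P)
    (h2 : fsim c (fun x y => x = y) (fun σ σ' => P σ σ' ∧ σ ∈ e) P) :
    fsim (rcomp (test e) c) (rstar (rcomp (test e') c')) P P := by
  rintro _ σ' τ hP ⟨σ, ⟨he, rfl⟩, hc⟩
  by_cases he' : σ' ∈ e'
  · obtain ⟨τ', hc', hP'⟩ := h1 σ σ' τ ⟨hP, he, he'⟩ hc
    exact ⟨τ', Relation.ReflTransGen.single ⟨σ', ⟨he', rfl⟩, hc'⟩, hP'⟩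
  · obtain ⟨_, rfl, hP'⟩ := h2 σ σ' τ ⟨hP, he⟩ hc
    exact ⟨σ', Relation.ReflTransGen.refl, hP'⟩

theorem fsim_test_compl {P : S → S → Prop} {e e' : Set S}
    (h0 : ∀ σ σ', P σ σ' → σ' ∈ e' → σ ∈ e) :
    fsim (test eᶜ) (test e'ᶜ) P (fun τ τ' => P τ τ' ∧ τ ∉ e ∧ τ' ∉ e') := by
  rintro _ σ' σ hP ⟨he, rfl⟩
  have he' : σ' ∉ e' := fun h => he (h0 σ σ' hP h)
  exact ⟨σ', ⟨he', rfl⟩, hP, he, he'⟩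

end Simulation

/-- Soundness of the forward-simulation while rule eWhL. -/
theorem stmt18 (S : Type*) (c c' P : S → S → Prop) (e e' : Set S)
    (h0 : ∀ σ σ', P σ σ' → σ' ∈ e' → σ ∈ e)
    (h1 : fsim c c' (fun σ σ' => P σ σ' ∧ σ ∈ e ∧ σ' ∈ e') P)
    (h2 : fsim c (fun x y => x = y) (fun σ σ' => P σ σ' ∧ σ ∈ e) P) :
    fsim (wh e c) (wh e' c') P (fun τ τ' => P τ τ' ∧ τ ∉ e ∧ τ' ∉ e') :=
  fsim_rcomp (fsim_rstar (fsim_guarded_step h1 h2)) (fsim_test_compl h0)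
end

section
/- Soundness of the backward-simulation while rule bWh in the relational model: for any set Σ, relations c, c', P on Σ and subsets e, e' of Σ, if the backward simulation judgment c | c' : (P ∧ ⌐e ∧ e'⌐) ⇐∃ P holds, where (P ∧ ⌐e ∧ e'⌐) σ σ' means P σ σ' ∧ σ ∈ e ∧ σ' ∈ e', then the backward simulation judgment (while e do c) | (while e' do c') : P ⇐∃ (P ∧ ⌐¬e ∧ ¬e'⌐) holds, where while e do c := ([e];c)* ; [¬e] and (P ∧ ⌐¬e ∧ ¬e'⌐) τ τ' means P τ τ' ∧ τ ∉ e ∧ τ' ∉ e'. -/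
open BiKAT

namespace BiKAT

variable {S : Type*}

theorem bsim_rcomp {c₁ c₂ d₁ d₂ R Q T : S → S → Prop}
    (h₁ : bsim c₁ d₁ R Q) (h₂ : bsim c₂ d₂ Q T) :
    bsim (rcomp c₁ c₂) (rcomp d₁ d₂) R T := by
  rintro σ τ τ' ⟨μ, hc₁, hc₂⟩ hT
  obtain ⟨μ', hQ, hd₂⟩ := h₂ μ τ τ' hc₂ hT
  obtain ⟨σ', hR, hd₁⟩ := h₁ σ μ μ' hc₁ hQ
  exact ⟨σ', hR, μ', hd₁, hd₂⟩

theorem bsim_test (e e' : Set S) (P : S → S → Prop) :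
    bsim (test e) (test e') P (fun τ τ' => P τ τ' ∧ τ ∈ e ∧ τ' ∈ e') := by
  rintro σ τ τ' ⟨-, rfl⟩ ⟨hP, -, hτ'⟩
  exact ⟨τ', hP, hτ', rfl⟩

theorem bsim_test_rcomp {c c' P Q : S → S → Prop} {e e' : Set S}
    (h : bsim c c' (fun σ σ' => P σ σ' ∧ σ ∈ e ∧ σ' ∈ e') Q) :
    bsim (rcomp (test e) c) (rcomp (test e') c') P Q :=
  bsim_rcomp (bsim_test e e' P) h

/-- The right-hand run is built backwards from the final pair of states, one left-hand step at a
time. -/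
theorem bsim_rstar {c c' P : S → S → Prop} (h : bsim c c' P P) :
    bsim (rstar c) (rstar c') P P := by
  intro σ τ τ' hc hP
  induction hc using Relation.ReflTransGen.head_induction_on with
  | refl => exact ⟨τ', hP, Relation.ReflTransGen.refl⟩
  | head hstep _ ih =>
    obtain ⟨μ', hPμ, hμ'⟩ := ih
    obtain ⟨σ', hPσ, hstep'⟩ := h _ _ _ hstep hPμ
    exact ⟨σ', hPσ, Relation.ReflTransGen.head hstep' hμ'⟩

end BiKAT

/-- Soundness of the backward-simulation while rule bWh. -/
theorem stmt19 (S : Type*) (c c' P : S → S → Prop) (e e' : Set S)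
    (h1 : bsim c c' (fun σ σ' => P σ σ' ∧ σ ∈ e ∧ σ' ∈ e') P) :
    bsim (wh e c) (wh e' c') P (fun τ τ' => P τ τ' ∧ τ ∉ e ∧ τ' ∉ e') :=
  bsim_rcomp (bsim_rstar (bsim_test_rcomp h1)) (bsim_test eᶜ e'ᶜ P)
end
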